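/- Let n1, n2 be positive integers, x_{ij} ∈ ℝ for j = 1,…,n_i, i = 1,2, let h : ℝ → ℝ^d be a function, set ρ1 = n1/n2 and w_{ij}(θ) = exp(α + β·h(x_{ij})) for θ = (α, β) ∈ ℝ × ℝ^d, and define l(θ) = −Σ_{i=1}^{2} Σ_{j=1}^{n_i} log(1 + ρ1 w_{ij}(θ)) + Σ_{j=1}^{n_1} (α + β·h(x_{1j})). For λ > 0, define the ridge-penalized empirical log-likelihood l_p(θ) = l(θ) − λ Σ_{k=1}^{d} β_k². Then l_p is strictly concave on ℝ × ℝ^d and has a unique global maximizer θ̂^λ. -/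

import Mathlib

/-! With `ψ(t) = log (1 + ρ eᵗ)` strictly convex and `L_y(θ) = α + β·y` linear, `-l_p(θ)` is
`Σⱼ ψ(L_{x₁ⱼ} θ) + λ Σₖ βₖ²`, plus the convex `Σⱼ ψ(L_{x₂ⱼ} θ)`, minus the linear `Σⱼ L_{x₁ⱼ} θ`.
The first summand is strictly convex because `θ ↦ ((L_{x₁ⱼ} θ)ⱼ, β)` is injective as soon as
`n₁ > 0`.

From `0 ≤ ψ(t)` and `log ρ + t ≤ ψ(t)`, `l(θ)` is at most `n₁ α + β·Σⱼ h(x₁ⱼ)` and at most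
`c − n₂ α − β·Σⱼ h(x₂ⱼ)`; Young's inequality lets half of the ridge term absorb the `β`-parts,
so `l_p(θ) ≤ C − |α| − (λ/2) Σₖ βₖ²`. Thus `l_p → −∞` at infinity, the continuous `l_p` attains
its maximum, and strict concavity makes the maximiser unique. -/

/-- The profile empirical log-likelihood of the density ratio model:
`l(θ) = −Σ_{i,j} log(1 + ρ1 exp(α + β·h(x_{ij}))) + Σ_{j=1}^{n1} (α + β·h(x_{1j}))`
with `ρ1 = n1/n2`, for `θ = (α, β) ∈ ℝ × ℝ^d`. -/
noncomputable def ell {n1 n2 d : ℕ} (x1 : Fin n1 → ℝ) (x2 : Fin n2 → ℝ)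
    (h : ℝ → Fin d → ℝ) (θ : ℝ × (Fin d → ℝ)) : ℝ :=
  (- ∑ j, Real.log (1 + ((n1 : ℝ) / (n2 : ℝ)) *
        Real.exp (θ.1 + ∑ k, θ.2 k * h (x1 j) k))
   - ∑ j, Real.log (1 + ((n1 : ℝ) / (n2 : ℝ)) *
        Real.exp (θ.1 + ∑ k, θ.2 k * h (x2 j) k)))
  + ∑ j, (θ.1 + ∑ k, θ.2 k * h (x1 j) k)

/-- The ridge-penalized empirical log-likelihood
`l_p(θ) = l(θ) − λ Σ_k β_k²`. -/
noncomputable def ellRidge {n1 n2 d : ℕ} (x1 : Fin n1 → ℝ) (x2 : Fin n2 → ℝ)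
    (h : ℝ → Fin d → ℝ) (lam : ℝ) (θ : ℝ × (Fin d → ℝ)) : ℝ :=
  ell x1 x2 h θ - lam * ∑ k, (θ.2 k) ^ 2

open Real Set Filter Finset

section Convexity

variable {E F G : Type*} [AddCommGroup E] [Module ℝ E] [AddCommGroup F] [Module ℝ F]
  [AddCommGroup G] [Module ℝ G]

theorem StrictConvexOn.comp_linearMap_of_injective {f : F → ℝ}
    (hf : StrictConvexOn ℝ univ f) (A : E →ₗ[ℝ] F) (hA : Function.Injective A) :
    StrictConvexOn ℝ univ (f ∘ A) := by
  refine ⟨convex_univ, fun x _ y _ hxy a b ha hb hab => ?_⟩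
  simpa only [Function.comp_apply, map_add, map_smul] using
    hf.2 trivial trivial (hA.ne hxy) ha hb hab

theorem StrictConvexOn.const_mul {s : Set E} {f : E → ℝ} {c : ℝ} (hf : StrictConvexOn ℝ s f)
    (hc : 0 < c) : StrictConvexOn ℝ s (fun x => c * f x) := by
  refine ⟨hf.1, fun x hx y hy hxy a b ha hb hab => ?_⟩
  have := mul_lt_mul_of_pos_left (hf.2 hx hy hxy ha hb hab) hc
  simp only [smul_eq_mul] at this ⊢
  linarith

theorem StrictConvexOn.fst_add_snd {f : F → ℝ} {g : G → ℝ}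
    (hf : StrictConvexOn ℝ univ f) (hg : StrictConvexOn ℝ univ g) :
    StrictConvexOn ℝ univ (fun p : F × G => f p.1 + g p.2) := by
  refine ⟨convex_univ, fun p _ q _ hpq a b ha hb hab => ?_⟩
  have hf' := hf.convexOn.2 (mem_univ p.1) (mem_univ q.1) ha.le hb.le hab
  have hg' := hg.convexOn.2 (mem_univ p.2) (mem_univ q.2) ha.le hb.le hab
  simp only [Prod.fst_add, Prod.snd_add, Prod.smul_fst, Prod.smul_snd, smul_eq_mul] at hf' hg' ⊢
  rcases eq_or_ne p.1 q.1 with h1 | h1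
  · have h2 : p.2 ≠ q.2 := fun h2 => hpq (Prod.ext h1 h2)
    have := hg.2 trivial trivial h2 ha hb hab
    simp only [smul_eq_mul] at this
    linarith
  · have := hf.2 trivial trivial h1 ha hb hab
    simp only [smul_eq_mul] at this
    linarith

theorem StrictConvexOn.sum_comp_apply {ι : Type*} [Fintype ι] {φ : ℝ → ℝ}
    (hφ : StrictConvexOn ℝ univ φ) :
    StrictConvexOn ℝ univ (fun t : ι → ℝ => ∑ i, φ (t i)) := by
  refine ⟨convex_univ, fun s _ t _ hst a b ha hb hab => ?_⟩
  obtain ⟨i, hi⟩ := Function.ne_iff.mp hst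
  calc ∑ k, φ ((a • s + b • t) k) < ∑ k, (a * φ (s k) + b * φ (t k)) := by
        refine Finset.sum_lt_sum (fun k _ => hφ.convexOn.2 trivial trivial ha.le hb.le hab)
          ⟨i, mem_univ i, hφ.2 trivial trivial hi ha hb hab⟩
    _ = a • ∑ k, φ (s k) + b • ∑ k, φ (t k) := by
        simp only [smul_eq_mul, Finset.mul_sum, Finset.sum_add_distrib]

end Convexity

theorem strictConvexOn_log_one_add_mul_exp {ρ : ℝ} (hρ : 0 < ρ) :
    StrictConvexOn ℝ univ (fun t => log (1 + ρ * exp t)) := by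
  have hpos : ∀ t, 0 < 1 + ρ * exp t := fun t => by positivity
  have hderiv : deriv (fun t => log (1 + ρ * exp t)) = fun t => ρ * exp t / (1 + ρ * exp t) :=
    funext fun t => (((hasDerivAt_exp t).const_mul ρ).const_add 1).log (hpos t).ne' |>.deriv
  refine StrictMono.strictConvexOn_univ_of_deriv
    (by fun_prop (disch := exact fun t => (hpos t).ne')) ?_
  intro s t hst
  rw [hderiv, div_lt_div_iff₀ (hpos s) (hpos t)]
  nlinarith [exp_lt_exp.mpr hst]

section LinearPredictor

variable {ι : Type*} [Fintype ι]

def linPred (y : ι → ℝ) : ℝ × (ι → ℝ) →ₗ[ℝ] ℝ where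
  toFun θ := θ.1 + ∑ k, θ.2 k * y k
  map_add' θ θ' := by
    simp only [Prod.fst_add, Prod.snd_add, Pi.add_apply, add_mul, Finset.sum_add_distrib]
    ring
  map_smul' c θ := by simp only [Prod.smul_fst, Prod.smul_snd, Pi.smul_apply, smul_eq_mul,
    RingHom.id_apply, mul_add, Finset.mul_sum, mul_assoc]

theorem linPred_apply (y : ι → ℝ) (θ : ℝ × (ι → ℝ)) :
    linPred y θ = θ.1 + ∑ k, θ.2 k * y k := rfl

theorem injective_linPred_prod_snd {κ : Type*} [Nonempty κ] (y : κ → ι → ℝ) :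
    Function.Injective
      ((LinearMap.pi fun j => linPred (y j)).prod (LinearMap.snd ℝ ℝ (ι → ℝ))) := by
  obtain ⟨j⟩ := ‹Nonempty κ›
  rw [← LinearMap.ker_eq_bot, LinearMap.ker_eq_bot']
  intro θ hθ
  have h2 : θ.2 = 0 := congrArg Prod.snd hθ
  have h1 : linPred (y j) θ = 0 := congrFun (congrArg Prod.fst hθ) j
  rw [linPred_apply, h2] at h1
  simp only [Pi.zero_apply, zero_mul, Finset.sum_const_zero, add_zero] at h1
  exact Prod.ext h1 h2

end LinearPredictor

theorem neg_ellRidge_eq {n1 n2 d : ℕ} (x1 : Fin n1 → ℝ) (x2 : Fin n2 → ℝ) (h : ℝ → Fin d → ℝ)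
    (lam : ℝ) (θ : ℝ × (Fin d → ℝ)) :
    -ellRidge x1 x2 h lam θ =
      (∑ j, log (1 + (n1 / n2 : ℝ) * exp (linPred (h (x1 j)) θ)) + ∑ k, lam * θ.2 k ^ 2)
        + ∑ j, log (1 + (n1 / n2 : ℝ) * exp (linPred (h (x2 j)) θ))
        - ∑ j, linPred (h (x1 j)) θ := by
  simp only [ellRidge, ell, linPred_apply, ← Finset.mul_sum]
  ring

theorem strictConcaveOn_ellRidge {n1 n2 d : ℕ} (hn1 : 0 < n1) (hn2 : 0 < n2)
    (x1 : Fin n1 → ℝ) (x2 : Fin n2 → ℝ) (h : ℝ → Fin d → ℝ) {lam : ℝ} (hlam : 0 < lam) :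
    StrictConcaveOn ℝ univ (ellRidge x1 x2 h lam) := by
  have hψ := strictConvexOn_log_one_add_mul_exp (ρ := n1 / n2) (by positivity)
  have hsq : StrictConvexOn ℝ univ (fun x : ℝ => lam * x ^ 2) :=
    (even_two.strictConvexOn_pow two_ne_zero).const_mul hlam
  have : Nonempty (Fin n1) := ⟨⟨0, hn1⟩⟩
  have hfirst := (hψ.sum_comp_apply.fst_add_snd hsq.sum_comp_apply).comp_linearMap_of_injective _
    (injective_linPred_prod_snd (h ∘ x1))
  have hsecond : ConvexOn ℝ univ
      (fun θ => ∑ j, log (1 + (n1 / n2 : ℝ) * exp (linPred (h (x2 j)) θ))) :=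
    hψ.sum_comp_apply.convexOn.comp_linearMap (LinearMap.pi fun j => linPred (h (x2 j)))
  have hlin := (-∑ j, linPred (h (x1 j))).convexOn convex_univ
  rw [← neg_strictConvexOn_iff]
  refine ((hfirst.add_convexOn hsecond).add_convexOn hlin).congr fun θ _ => ?_
  simp [neg_ellRidge_eq, sub_eq_add_neg]

theorem log_one_add_mul_exp_nonneg {ρ : ℝ} (hρ : 0 ≤ ρ) (t : ℝ) : 0 ≤ log (1 + ρ * exp t) :=
  log_nonneg (le_add_of_nonneg_right (by positivity))

theorem log_add_le_log_one_add_mul_exp {ρ : ℝ} (hρ : 0 < ρ) (t : ℝ) :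
    log ρ + t ≤ log (1 + ρ * exp t) := by
  rw [← log_exp t, ← log_mul hρ.ne' (exp_pos t).ne', log_exp]
  exact log_le_log (by positivity) (le_add_of_nonneg_left zero_le_one)

theorem abs_sum_mul_le_mul_sum_sq_add {ι : Type*} [Fintype ι] {μ : ℝ} (hμ : 0 < μ) (b v : ι → ℝ) :
    |∑ k, b k * v k| ≤ μ * ∑ k, b k ^ 2 + (∑ k, v k ^ 2) / (4 * μ) := by
  rw [Finset.mul_sum, Finset.sum_div, ← Finset.sum_add_distrib]
  refine (abs_sum_le_sum_abs _ _).trans (Finset.sum_le_sum fun k _ => ?_)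
  have key : μ * |b k| ^ 2 + |v k| ^ 2 / (4 * μ) - |b k| * |v k|
      = (2 * μ * |b k| - |v k|) ^ 2 / (4 * μ) := by
    field_simp
    ring
  rw [abs_mul, ← sq_abs (b k), ← sq_abs (v k), ← sub_nonneg, key]
  positivity

theorem sum_linPred {ι κ : Type*} [Fintype ι] [Fintype κ] (y : κ → ι → ℝ) (θ : ℝ × (ι → ℝ)) :
    ∑ j, linPred (y j) θ = Fintype.card κ * θ.1 + ∑ k, θ.2 k * ∑ j, y j k := by
  simp only [linPred_apply, Finset.sum_add_distrib, Finset.sum_const, Finset.card_univ,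
    nsmul_eq_mul, Finset.mul_sum]
  rw [Finset.sum_comm]

theorem ell_le_sum_linPred {n1 n2 d : ℕ} (x1 : Fin n1 → ℝ) (x2 : Fin n2 → ℝ) (h : ℝ → Fin d → ℝ)
    (θ : ℝ × (Fin d → ℝ)) : ell x1 x2 h θ ≤ ∑ j, linPred (h (x1 j)) θ := by
  have hρ : (0 : ℝ) ≤ n1 / n2 := by positivity
  have h1 := Finset.sum_nonneg fun j (_ : j ∈ Finset.univ) =>
    log_one_add_mul_exp_nonneg hρ (linPred (h (x1 j)) θ)
  have h2 := Finset.sum_nonneg fun j (_ : j ∈ Finset.univ) =>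
    log_one_add_mul_exp_nonneg hρ (linPred (h (x2 j)) θ)
  simp only [ell, linPred_apply] at h1 h2 ⊢
  linarith

theorem ell_le_sub_sum_linPred {n1 n2 d : ℕ} (hn1 : 0 < n1) (hn2 : 0 < n2)
    (x1 : Fin n1 → ℝ) (x2 : Fin n2 → ℝ) (h : ℝ → Fin d → ℝ) (θ : ℝ × (Fin d → ℝ)) :
    ell x1 x2 h θ ≤ -((n1 + n2) * log (n1 / n2)) - ∑ j, linPred (h (x2 j)) θ := by
  have hρ : (0 : ℝ) < n1 / n2 := by positivity
  have h1 := Finset.sum_le_sum fun j (_ : j ∈ Finset.univ) =>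
    log_add_le_log_one_add_mul_exp hρ (linPred (h (x1 j)) θ)
  have h2 := Finset.sum_le_sum fun j (_ : j ∈ Finset.univ) =>
    log_add_le_log_one_add_mul_exp hρ (linPred (h (x2 j)) θ)
  simp only [Finset.sum_add_distrib, Finset.sum_const, Finset.card_univ, Fintype.card_fin,
    nsmul_eq_mul] at h1 h2
  simp only [ell, linPred_apply] at h1 h2 ⊢
  linarith

theorem exists_ellRidge_le_sub_abs_fst_add_sum_sq {n1 n2 d : ℕ} (hn1 : 0 < n1) (hn2 : 0 < n2)
    (x1 : Fin n1 → ℝ) (x2 : Fin n2 → ℝ) (h : ℝ → Fin d → ℝ) {lam : ℝ} (hlam : 0 < lam) :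
    ∃ C, ∀ θ, ellRidge x1 x2 h lam θ ≤ C - (|θ.1| + lam / 2 * ∑ k, θ.2 k ^ 2) := by
  have hlam2 : 0 < lam / 2 := by positivity
  set V1 : Fin d → ℝ := fun k => ∑ j, h (x1 j) k
  set V2 : Fin d → ℝ := fun k => ∑ j, h (x2 j) k
  set C1 := (∑ k, V1 k ^ 2) / (4 * (lam / 2))
  set C2 := -((n1 + n2) * log (n1 / n2)) + (∑ k, V2 k ^ 2) / (4 * (lam / 2))
  refine ⟨max C1 C2, fun θ => ?_⟩
  rw [ellRidge]
  rcases lt_or_ge θ.1 0 with hα | hα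
  · have hell := ell_le_sum_linPred x1 x2 h θ
    rw [sum_linPred, Fintype.card_fin] at hell
    have hyoung := (le_abs_self _).trans (abs_sum_mul_le_mul_sum_sq_add hlam2 θ.2 V1)
    have hn1α : n1 * θ.1 ≤ θ.1 := by nlinarith [show (1 : ℝ) ≤ n1 by exact_mod_cast hn1]
    rw [abs_of_neg hα]
    linarith [le_max_left C1 C2]
  · have hell := ell_le_sub_sum_linPred hn1 hn2 x1 x2 h θ
    rw [sum_linPred, Fintype.card_fin] at hell
    have hyoung := (neg_abs_le _).trans' (neg_le_neg (abs_sum_mul_le_mul_sum_sq_add hlam2 θ.2 V2))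
    have hn2α : θ.1 ≤ n2 * θ.1 := by nlinarith [show (1 : ℝ) ≤ n2 by exact_mod_cast hn2]
    rw [abs_of_nonneg hα]
    linarith [le_max_right C1 C2]

theorem tendsto_sum_sq_cocompact_atTop {ι : Type*} [Fintype ι] :
    Tendsto (fun β : ι → ℝ => ∑ k, β k ^ 2) (cocompact (ι → ℝ)) atTop := by
  rw [← coprodᵢ_cocompact]
  refine tendsto_iSup.2 fun k => tendsto_atTop_mono (f := fun β : ι → ℝ => ‖β k‖ ^ 2)
    (fun β => ?_) ?_
  · rw [Real.norm_eq_abs, sq_abs]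
    exact Finset.single_le_sum (f := fun k => β k ^ 2) (fun _ _ => sq_nonneg _) (mem_univ k)
  · exact ((tendsto_pow_atTop two_ne_zero).comp tendsto_norm_cocompact_atTop).comp tendsto_comap

theorem tendsto_abs_fst_add_mul_sum_sq_cocompact_atTop {ι : Type*} [Fintype ι] {μ : ℝ}
    (hμ : 0 < μ) :
    Tendsto (fun θ : ℝ × (ι → ℝ) => |θ.1| + μ * ∑ k, θ.2 k ^ 2) (cocompact _) atTop := by
  have hQ : ∀ β : ι → ℝ, 0 ≤ μ * ∑ k, β k ^ 2 := fun β => by positivity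
  rw [← coprod_cocompact]
  refine Tendsto.sup ?_ ?_
  · refine tendsto_atTop_mono (f := fun θ : ℝ × (ι → ℝ) => ‖θ.1‖) (fun θ => ?_) ?_
    · exact (Real.norm_eq_abs _).trans_le (le_add_of_nonneg_right (hQ θ.2))
    · exact tendsto_norm_cocompact_atTop.comp tendsto_comap
  · refine tendsto_atTop_mono (f := fun θ : ℝ × (ι → ℝ) => μ * ∑ k, θ.2 k ^ 2)
      (fun θ => le_add_of_nonneg_left (abs_nonneg _)) ?_
    exact (tendsto_sum_sq_cocompact_atTop.const_mul_atTop hμ).comp tendsto_comap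

theorem continuous_ellRidge {n1 n2 d : ℕ} (x1 : Fin n1 → ℝ) (x2 : Fin n2 → ℝ)
    (h : ℝ → Fin d → ℝ) (lam : ℝ) : Continuous (ellRidge x1 x2 h lam) := by
  unfold ellRidge ell
  fun_prop (disch := intros; positivity)

theorem exists_forall_ellRidge_le {n1 n2 d : ℕ} (hn1 : 0 < n1) (hn2 : 0 < n2)
    (x1 : Fin n1 → ℝ) (x2 : Fin n2 → ℝ) (h : ℝ → Fin d → ℝ) {lam : ℝ} (hlam : 0 < lam) :
    ∃ θhat, ∀ θ, ellRidge x1 x2 h lam θ ≤ ellRidge x1 x2 h lam θhat := by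
  obtain ⟨C, hC⟩ := exists_ellRidge_le_sub_abs_fst_add_sum_sq hn1 hn2 x1 x2 h hlam
  refine (continuous_ellRidge x1 x2 h lam).exists_forall_ge (tendsto_atBot_mono hC ?_)
  exact tendsto_atBot_add_const_left _ C
    (tendsto_neg_atTop_atBot.comp (tendsto_abs_fst_add_mul_sum_sq_cocompact_atTop (by positivity)))

/-- For `λ > 0`, the ridge-penalized empirical log-likelihood is
strictly concave on `ℝ × ℝ^d` and possesses a unique global maximizer. -/
theorem ridge_penalized_strictly_concave_unique_max {n1 n2 d : ℕ}
    (hn1 : 0 < n1) (hn2 : 0 < n2)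
    (x1 : Fin n1 → ℝ) (x2 : Fin n2 → ℝ) (h : ℝ → Fin d → ℝ)
    (lam : ℝ) (hlam : 0 < lam) :
    StrictConcaveOn ℝ Set.univ (ellRidge x1 x2 h lam) ∧
    ∃! θhat : ℝ × (Fin d → ℝ),
      ∀ θ : ℝ × (Fin d → ℝ),
        ellRidge x1 x2 h lam θ ≤ ellRidge x1 x2 h lam θhat := by
  have hconc := strictConcaveOn_ellRidge hn1 hn2 x1 x2 h hlam
  obtain ⟨θhat, hmax⟩ := exists_forall_ellRidge_le hn1 hn2 x1 x2 h hlam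
  refine ⟨hconc, θhat, hmax, fun θ hθ => ?_⟩
  exact hconc.eq_of_isMaxOn (fun z _ => hθ z) (fun z _ => hmax z) trivial trivial
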